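/- arXiv:2604.03194 — 10 statements merged into one kernel-verified Lean document; each statement's English description precedes it below -/
import Mathlib

section
/- Let n and k be positive integers, let M be an n×n complex matrix, let f : Fin n → Fin k be a surjective map with characteristic matrix P defined by P i j = 1 if f i = j and 0 otherwise, and let Q be a k×k complex matrix such that M * P = P * Q. Then every eigenvalue of Q is an eigenvalue of M, that is, spectrum ℂ Q ⊆ spectrum ℂ M. -/
/-!
If `Q v = μ v` with `v ≠ 0`, then `M (P v) = P (Q v) = μ (P v)`, and `P v = v ∘ f` is nonzero
because `f` is surjective; so every eigenvector of `Q` lifts to one of `M`.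
-/

open Module End

theorem Module.End.HasEigenvalue.of_comp_eq_comp {R M N : Type*} [CommRing R]
    [AddCommGroup M] [Module R M] [AddCommGroup N] [Module R N]
    {f : End R M} {g : End R N} {p : N →ₗ[R] M} (hp : Function.Injective p)
    (h : f ∘ₗ p = p ∘ₗ g) {μ : R} (hμ : g.HasEigenvalue μ) : f.HasEigenvalue μ := by
  obtain ⟨v, hv⟩ := hμ.exists_hasEigenvector
  refine hasEigenvalue_of_hasEigenvector (x := p v) ⟨mem_eigenspace_iff.mpr ?_, ?_⟩
  · rw [← LinearMap.comp_apply, h, LinearMap.comp_apply, hv.apply_eq_smul, map_smul]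
  · exact (map_ne_zero_iff p hp).mpr hv.2

namespace Matrix

theorem spectrum_subset_of_mul_eq_mul {K m n : Type*} [Field K] [Fintype m] [DecidableEq m]
    [Fintype n] [DecidableEq n] {M : Matrix m m K} {P : Matrix m n K} {Q : Matrix n n K}
    (hP : Function.Injective P.mulVec) (h : M * P = P * Q) :
    spectrum K Q ⊆ spectrum K M := by
  intro μ hμ
  rw [← spectrum_toLin', ← hasEigenvalue_iff_mem_spectrum] at hμ ⊢
  refine hμ.of_comp_eq_comp (p := toLin' P) hP ?_
  rw [← toLin'_mul, h, toLin'_mul]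

theorem mulVec_eq_comp_of_apply_eq_ite {R m n : Type*} [NonAssocSemiring R] [Fintype n]
    [DecidableEq n] {f : m → n} {P : Matrix m n R} (hP : ∀ i j, P i j = if f i = j then 1 else 0)
    (v : n → R) : P *ᵥ v = v ∘ f := by
  ext i
  simp [mulVec, dotProduct, hP]

end Matrix

theorem quotient_spectrum_subset_general (n k : ℕ)
    (M : Matrix (Fin n) (Fin n) ℂ)
    (f : Fin n → Fin k) (hf : Function.Surjective f)
    (P : Matrix (Fin n) (Fin k) ℂ)
    (hP : ∀ i j, P i j = if f i = j then 1 else 0)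
    (Q : Matrix (Fin k) (Fin k) ℂ)
    (hQ : M * P = P * Q) :
    spectrum ℂ Q ⊆ spectrum ℂ M := by
  have hPinj : Function.Injective P.mulVec := by
    simpa only [funext (Matrix.mulVec_eq_comp_of_apply_eq_ite hP)] using hf.injective_comp_right
  exact Matrix.spectrum_subset_of_mul_eq_mul hPinj hQ

/-- Every eigenvalue of an equitable quotient matrix `Q` of a complex matrix `M`
is an eigenvalue of `M`. -/
theorem quotient_spectrum_subset (n k : ℕ) (hn : 0 < n) (hk : 0 < k)
    (M : Matrix (Fin n) (Fin n) ℂ)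
    (f : Fin n → Fin k) (hf : Function.Surjective f)
    (P : Matrix (Fin n) (Fin k) ℂ)
    (hP : ∀ i j, P i j = if f i = j then 1 else 0)
    (Q : Matrix (Fin k) (Fin k) ℂ)
    (hQ : M * P = P * Q) :
    spectrum ℂ Q ⊆ spectrum ℂ M :=
  quotient_spectrum_subset_general n k M f hf P hP Q hQ
end

section
/- Let n and k be positive integers, let M be an n×n real matrix all of whose entries are nonnegative, let f : Fin n → Fin k be a surjective map with characteristic matrix P defined by P i j = 1 if f i = j and 0 otherwise, and let Q be a k×k real matrix such that M * P = P * Q. Then the spectral radius of M equals the spectral radius of Q, i.e., spectralRadius ℂ (M.map Complex.ofReal) = spectralRadius ℂ (Q.map Complex.ofReal). -/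
/-!
By Gelfand's formula the spectral radius is determined by the norms of the powers, so it suffices
to show `‖M ^ m‖ = ‖Q ^ m‖` in the `L^∞` operator norm (maximal absolute row sum). The relation
`M * P = P * Q` propagates to `M ^ m * P = P * Q ^ m`, which says that the row sum of `M ^ m` at `i`
equals the row sum of `Q ^ m` at `f i`. Both powers are entrywise nonnegative (`Q` is, because `f`
is surjective), so absolute row sums are row sums, and surjectivity of `f` identifies the maxima.
-/

open scoped Matrix.Norms.Operator

namespace Matrix

variable {ι κ ν : Type*}

def partitionMatrix (R : Type*) [Zero R] [One R] [DecidableEq κ] (f : ι → κ) : Matrix ι κ R :=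
  of fun i j => if f i = j then 1 else 0

section Semiring

variable {R : Type*} [Semiring R]

theorem partitionMatrix_mul_apply [DecidableEq κ] [Fintype κ] (f : ι → κ) (A : Matrix κ ν R)
    (i : ι) (j : ν) : (partitionMatrix R f * A) i j = A (f i) j := by
  simp [partitionMatrix, mul_apply]

theorem sum_mul_partitionMatrix_apply [DecidableEq κ] [Fintype ι] [Fintype κ] (f : ι → κ)
    (B : Matrix ν ι R) (i : ν) : ∑ j, (B * partitionMatrix R f) i j = ∑ l, B i l := by
  simp only [mul_apply]
  rw [Finset.sum_comm]
  simp [partitionMatrix]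

theorem pow_mul_eq_mul_pow_of_mul_eq [Fintype ι] [DecidableEq ι] [Fintype κ] [DecidableEq κ]
    {A : Matrix ι ι R} {P : Matrix ι κ R} {B : Matrix κ κ R} (h : A * P = P * B) (m : ℕ) :
    A ^ m * P = P * B ^ m := by
  induction m with
  | zero => simp
  | succ m ih => rw [pow_succ, pow_succ, Matrix.mul_assoc, h, ← Matrix.mul_assoc, ih,
      Matrix.mul_assoc]

theorem sum_apply_eq_of_mul_partitionMatrix_eq [DecidableEq κ] [Fintype ι] [Fintype κ]
    {f : ι → κ} {A : Matrix ι ι R} {B : Matrix κ κ R}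
    (h : A * partitionMatrix R f = partitionMatrix R f * B) (i : ι) :
    ∑ j, B (f i) j = ∑ l, A i l := by
  simp only [← sum_mul_partitionMatrix_apply f A i, h, partitionMatrix_mul_apply]

theorem nonneg_of_mul_partitionMatrix_eq [PartialOrder R] [IsOrderedRing R] [DecidableEq κ]
    [Fintype ι] [Fintype κ] {f : ι → κ} (hf : Function.Surjective f) {A : Matrix ι ι R}
    (hA : ∀ i j, 0 ≤ A i j) {B : Matrix κ κ R}
    (h : A * partitionMatrix R f = partitionMatrix R f * B) (c j : κ) : 0 ≤ B c j := by
  obtain ⟨i, rfl⟩ := hf c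
  rw [← partitionMatrix_mul_apply f B i j, ← h, mul_apply]
  refine Finset.sum_nonneg fun l _ => mul_nonneg (hA i l) ?_
  rw [partitionMatrix, of_apply]
  split_ifs <;> simp

end Semiring

theorem linfty_opNNNorm_map_ofReal [Fintype ι] [Fintype κ] (A : Matrix ι κ ℝ) :
    ‖A.map Complex.ofReal‖₊ = ‖A‖₊ := by
  simp [linfty_opNNNorm_def]

theorem linfty_opNNNorm_map_ofReal_pow [Fintype ι] [DecidableEq ι] (A : Matrix ι ι ℝ)
    (m : ℕ) : ‖A.map Complex.ofReal ^ m‖₊ = ‖A ^ m‖₊ := by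
  rw [← linfty_opNNNorm_map_ofReal (A ^ m)]
  exact congrArg _ (A.map_pow Complex.ofRealHom m).symm

theorem linfty_opNNNorm_eq_of_mul_partitionMatrix_eq [Fintype ι] [Fintype κ] [DecidableEq κ]
    {f : ι → κ} (hf : Function.Surjective f) {A : Matrix ι ι ℝ} (hA : ∀ i j, 0 ≤ A i j)
    {B : Matrix κ κ ℝ} (h : A * partitionMatrix ℝ f = partitionMatrix ℝ f * B) :
    ‖A‖₊ = ‖B‖₊ := by
  have hB := nonneg_of_mul_partitionMatrix_eq hf hA h
  have hrow (i : ι) : ∑ l, ‖A i l‖₊ = ∑ j, ‖B (f i) j‖₊ := by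
    apply NNReal.coe_injective
    simp only [NNReal.coe_sum, coe_nnnorm, Real.norm_of_nonneg (hA _ _),
      Real.norm_of_nonneg (hB _ _), sum_apply_eq_of_mul_partitionMatrix_eq h]
  rw [linfty_opNNNorm_def, linfty_opNNNorm_def, Finset.sup_congr rfl fun i _ => hrow i]
  calc _ = (Finset.univ.image f).sup fun c => ∑ j, ‖B c j‖₊ := (Finset.sup_image ..).symm
    _ = _ := by rw [Finset.image_univ_of_surjective hf]

end Matrix

theorem spectralRadius_eq_of_nnnorm_pow_eq {A B : Type*} [NormedRing A] [NormedAlgebra ℂ A]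
    [CompleteSpace A] [NormedRing B] [NormedAlgebra ℂ B] [CompleteSpace B] {a : A} {b : B}
    (h : ∀ m : ℕ, ‖a ^ m‖₊ = ‖b ^ m‖₊) :
    spectralRadius ℂ a = spectralRadius ℂ b :=
  tendsto_nhds_unique (spectrum.pow_nnnorm_pow_one_div_tendsto_nhds_spectralRadius a)
    ((spectrum.pow_nnnorm_pow_one_div_tendsto_nhds_spectralRadius b).congr fun m => by rw [h])

theorem spectralRadius_eq_of_equitable_general (n k : ℕ)
    (M : Matrix (Fin n) (Fin n) ℝ) (hM : ∀ i j, 0 ≤ M i j)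
    (f : Fin n → Fin k) (hf : Function.Surjective f)
    (P : Matrix (Fin n) (Fin k) ℝ)
    (hP : ∀ i j, P i j = if f i = j then 1 else 0)
    (Q : Matrix (Fin k) (Fin k) ℝ)
    (hQ : M * P = P * Q) :
    spectralRadius ℂ (M.map Complex.ofReal) = spectralRadius ℂ (Q.map Complex.ofReal) := by
  obtain rfl : P = Matrix.partitionMatrix ℝ f := Matrix.ext hP
  refine spectralRadius_eq_of_nnnorm_pow_eq fun m => ?_
  rw [Matrix.linfty_opNNNorm_map_ofReal_pow, Matrix.linfty_opNNNorm_map_ofReal_pow]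
  exact Matrix.linfty_opNNNorm_eq_of_mul_partitionMatrix_eq hf (Matrix.pow_apply_nonneg hM m)
    (Matrix.pow_mul_eq_mul_pow_of_mul_eq hQ m)

/-- A nonnegative real matrix and any of its equitable quotient matrices have the
same spectral radius. -/
theorem spectralRadius_eq_of_equitable (n k : ℕ) (hn : 0 < n) (hk : 0 < k)
    (M : Matrix (Fin n) (Fin n) ℝ) (hM : ∀ i j, 0 ≤ M i j)
    (f : Fin n → Fin k) (hf : Function.Surjective f)
    (P : Matrix (Fin n) (Fin k) ℝ)
    (hP : ∀ i j, P i j = if f i = j then 1 else 0)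
    (Q : Matrix (Fin k) (Fin k) ℝ)
    (hQ : M * P = P * Q) :
    spectralRadius ℂ (M.map Complex.ofReal) = spectralRadius ℂ (Q.map Complex.ofReal) :=
  spectralRadius_eq_of_equitable_general n k M hM f hf P hP Q hQ
end

section
/- Let M = !![10,-1,-1,-4; -1,10,-1,-4; 6,6,-14,1; 6,6,1,-14] be the 4×4 real matrix above, let P = !![1,0; 1,0; 0,1; 0,1] be the characteristic matrix of the partition {{1,2},{3,4}}, and let Q = !![9,-5; 12,-13]. Then M * P = P * Q (so the partition is equitable with quotient Q), the number 11 is an eigenvalue of M, i.e., (11 : ℂ) ∈ spectrum ℂ (M.map Complex.ofReal), yet every λ ∈ spectrum ℂ (Q.map Complex.ofReal) satisfies ‖λ‖ < 11. In particular, a matrix with negative entries and its equitable quotient matrix need not share the same spectral radius. -/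
/-!
The vector `(1, -1, 0, 0)`, which sums to zero on each cell of the partition, is an eigenvector
of `M` for `11`; such eigenvectors are invisible to the quotient. The eigenvalues of the
`2 × 2` quotient `Q` are the roots of `X ^ 2 + 4 X - 57`, and the quadratic formula bounds them
by `(4 + √244) / 2 < 11`.
-/

open Matrix

theorem Matrix.mem_spectrum_of_mulVec_eq_smul {R n : Type*} [CommRing R] [Fintype n]
    [DecidableEq n] {A : Matrix n n R} {μ : R} {v : n → R} (hv : v ≠ 0)
    (h : A *ᵥ v = μ • v) :
    μ ∈ spectrum R A :=
  spectrum_toLin' A ▸ (Module.End.hasEigenvalue_of_hasEigenvector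
    (Module.End.hasEigenvector_iff.mpr ⟨Module.End.mem_eigenspace_iff.mpr h, hv⟩)).mem_spectrum

theorem Matrix.sq_sub_trace_mul_add_det_eq_zero_of_mem_spectrum {K : Type*} [Field K]
    {A : Matrix (Fin 2) (Fin 2) K} {μ : K} (h : μ ∈ spectrum K A) :
    μ ^ 2 - A.trace * μ + A.det = 0 := by
  simpa [charpoly_fin_two] using mem_spectrum_iff_isRoot_charpoly.mp h

theorem norm_two_mul_le_of_sq_sub_mul_add_eq_zero {𝕜 : Type*} [NormedField 𝕜] {b c μ : 𝕜}
    (h : μ ^ 2 - b * μ + c = 0) : ‖2 * μ‖ ≤ ‖b‖ + √‖b ^ 2 - 4 * c‖ := by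
  have hsq : (2 * μ - b) ^ 2 = b ^ 2 - 4 * c := by linear_combination 4 * h
  have hnorm : ‖2 * μ - b‖ = √‖b ^ 2 - 4 * c‖ := by
    rw [← hsq, norm_pow, Real.sqrt_sq (norm_nonneg _)]
  calc ‖2 * μ‖ = ‖b + (2 * μ - b)‖ := by rw [add_sub_cancel]
    _ ≤ ‖b‖ + √‖b ^ 2 - 4 * c‖ := hnorm ▸ norm_add_le _ _

theorem Matrix.norm_two_mul_le_of_mem_spectrum_fin_two {𝕜 : Type*} [NormedField 𝕜]
    {A : Matrix (Fin 2) (Fin 2) 𝕜} {μ : 𝕜} (h : μ ∈ spectrum 𝕜 A) :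
    ‖2 * μ‖ ≤ ‖A.trace‖ + √‖A.trace ^ 2 - 4 * A.det‖ :=
  norm_two_mul_le_of_sq_sub_mul_add_eq_zero (sq_sub_trace_mul_add_det_eq_zero_of_mem_spectrum h)

/-- A matrix with negative entries and its equitable quotient matrix need not share
the same spectral radius: here `11` is an eigenvalue of `M`, but every eigenvalue of
the equitable quotient `Q` has norm strictly less than `11`. -/
theorem counterexample_spectral_radius
    (M : Matrix (Fin 4) (Fin 4) ℝ)
    (hM : M = !![10, -1, -1, -4; -1, 10, -1, -4; 6, 6, -14, 1; 6, 6, 1, -14])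
    (P : Matrix (Fin 4) (Fin 2) ℝ)
    (hP : P = !![1, 0; 1, 0; 0, 1; 0, 1])
    (Q : Matrix (Fin 2) (Fin 2) ℝ)
    (hQ : Q = !![9, -5; 12, -13]) :
    M * P = P * Q ∧
      (11 : ℂ) ∈ spectrum ℂ (M.map Complex.ofReal) ∧
      ∀ μ ∈ spectrum ℂ (Q.map Complex.ofReal), ‖μ‖ < 11 := by
  subst hM hP hQ
  refine ⟨?_, ?_, fun μ hμ ↦ ?_⟩
  · ext i j
    fin_cases i <;> fin_cases j <;> norm_num [mul_apply, Fin.sum_univ_succ]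
  · refine mem_spectrum_of_mulVec_eq_smul (v := ![1, -1, 0, 0]) (by simp) ?_
    ext i
    fin_cases i <;> norm_num [mulVec, dotProduct, Fin.sum_univ_succ]
  · have hbound := norm_two_mul_le_of_mem_spectrum_fin_two hμ
    norm_num [trace_fin_two, det_fin_two] at hbound
    have hsqrt : √244 < 16 := (Real.sqrt_lt' (by norm_num)).mpr (by norm_num)
    linarith
end

section
/- Let n ≥ 1 and let M be the (n+2)×(n+2) complex matrix with indices 0,…,n+1 defined by: M 0 0 = 4n−2, M 0 1 = −(2n−2), and M 0 j = −2 for 2 ≤ j ≤ n+1; M 1 0 = −1, M 1 1 = 4n+1, and M 1 j = −4 for 2 ≤ j ≤ n+1; and for 2 ≤ i ≤ n+1: M i 0 = −1, M i 1 = −2(2n−2), M i i = 8n−7, and M i j = −4 for 2 ≤ j ≤ n+1 with j ≠ i. Let P be the characteristic matrix of the partition {{0},{1},{2,…,n+1}} and let Q = !![4n−2, −(2n−2), −2n; −1, 4n+1, −4n; −1, −2(2n−2), 4n−3]. Then M * P = P * Q, and the set of eigenvalues of M equals the set of eigenvalues of Q: spectrum ℂ M = spectrum ℂ Q. Thus the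 equitable quotient matrix Q of order 3 contains all the distinct eigenvalues of M. -/
/-!
Write `c = 8n - 3`, let `P` be the characteristic matrix of the partition and let `S` be the
`3 × 3` matrix (`reducedMatrix n`) with `M = c • 1 + P S Pᵀ`; then `Q = c • 1 + S PᵀP`. Hence `M P = P Q`, and the
nonzero eigenvalues of `P (S Pᵀ)` and `(S Pᵀ) P` coincide. Rows `1` and `2` of `S` are equal, so
`S PᵀP` is singular, and so is `P S Pᵀ`, whose rows `1` and `2` (distinct since `n ≥ 1`) are
equal as well; thus `0` is an eigenvalue of both.
-/

open Matrix Polynomial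

section SpectrumMulComm

variable {K m n : Type*} [Field K] [Fintype m] [DecidableEq m] [Fintype n] [DecidableEq n]

theorem Matrix.mem_spectrum_mul_comm_of_ne_zero (A : Matrix m n K) (B : Matrix n m K) {μ : K}
    (hμ : μ ≠ 0) : μ ∈ spectrum K (A * B) ↔ μ ∈ spectrum K (B * A) := by
  have h := congrArg (fun p => p.eval μ) (charpoly_mul_comm' A B)
  simp only [eval_mul, eval_pow, eval_X] at h
  simp only [mem_spectrum_iff_isRoot_charpoly, IsRoot.def]
  constructor <;> intro h' <;> simpa [h', hμ] using h

theorem Matrix.spectrum_mul_comm (A : Matrix m n K) (B : Matrix n m K)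
    (h0 : (A * B).det = 0 ↔ (B * A).det = 0) : spectrum K (A * B) = spectrum K (B * A) := by
  ext μ
  rcases eq_or_ne μ 0 with rfl | hμ
  · simpa only [spectrum.zero_mem_iff, isUnit_iff_isUnit_det, isUnit_iff_ne_zero, not_not]
  · exact mem_spectrum_mul_comm_of_ne_zero A B hμ

theorem Matrix.spectrum_smul_one_add_mul_comm (c : K) (A : Matrix m n K) (B : Matrix n m K)
    (h0 : (A * B).det = 0 ↔ (B * A).det = 0) :
    spectrum K (c • 1 + A * B) = spectrum K (c • 1 + B * A) := by
  rw [← Algebra.algebraMap_eq_smul_one, ← Algebra.algebraMap_eq_smul_one,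
    ← spectrum.singleton_add_eq, ← spectrum.singleton_add_eq, spectrum_mul_comm A B h0]

end SpectrumMulComm

theorem Matrix.smul_one_add_mul_mul_comm {R m n : Type*} [CommSemiring R] [Fintype m]
    [DecidableEq m] [Fintype n] [DecidableEq n] (c : R) (A : Matrix m n R) (B : Matrix n m R) :
    (c • 1 + A * B) * A = A * (c • 1 + B * A) := by
  rw [Matrix.add_mul, Matrix.mul_add, Matrix.smul_mul, Matrix.mul_smul, Matrix.one_mul,
    Matrix.mul_one, Matrix.mul_assoc]

section CharacteristicMatrix

-- `(1 : Matrix κ κ R).submatrix f id` is the characteristic matrix of the partition of `ι` into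
-- the fibres of `f`.
variable {R ι κ : Type*} [CommSemiring R] [DecidableEq κ]

theorem Matrix.one_submatrix_mul_mul_transpose [Fintype κ] (f : ι → κ) (S : Matrix κ κ R) :
    (1 : Matrix κ κ R).submatrix f id * (S * ((1 : Matrix κ κ R).submatrix f id)ᵀ) =
      S.submatrix f f := by
  ext i k
  simp [mul_apply, one_apply]

theorem Matrix.transpose_one_submatrix_mul_self [Fintype ι] (f : ι → κ) :
    ((1 : Matrix κ κ R).submatrix f id)ᵀ * (1 : Matrix κ κ R).submatrix f id =
      diagonal fun j => ((Finset.univ.filter fun i => f i = j).card : R) := by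
  ext j j'
  simp only [mul_apply, transpose_apply, submatrix_apply, id, one_apply, mul_ite, mul_one,
    mul_zero, diagonal_apply]
  rcases eq_or_ne j j' with rfl | hne
  · simp +contextual [Finset.sum_boole, eq_comm]
  · simp only [hne, if_false]
    refine Finset.sum_eq_zero fun i _ => ?_
    grind

end CharacteristicMatrix

def cell (n : ℕ) (i : Fin (n + 2)) : Fin 3 := ⟨min i.val 2, by omega⟩

theorem val_cell (n : ℕ) (i : Fin (n + 2)) :
    (cell n i : ℕ) = if i.val = 0 then 0 else if i.val = 1 then 1 else 2 := by
  simp only [cell]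
  split_ifs <;> omega

theorem card_cell_eq (n : ℕ) (j : Fin 3) :
    (Finset.univ.filter fun i => cell n i = j).card = ![1, 1, n] j := by
  rw [Fin.card_filter_univ_succ', Fin.card_filter_univ_succ']
  fin_cases j <;> simp [cell, Fin.ext_iff]

def reducedMatrix (n : ℕ) : Matrix (Fin 3) (Fin 3) ℂ :=
  !![1 - 4 * (n : ℂ), 2 - 2 * (n : ℂ), -2;
     -1, 4 - 4 * (n : ℂ), -4;
     -1, 4 - 4 * (n : ℂ), -4]

theorem det_reducedMatrix (n : ℕ) : (reducedMatrix n).det = 0 :=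
  det_zero_of_row_eq (i := 1) (j := 2) (by decide) rfl

theorem det_submatrix_cell_reducedMatrix {n : ℕ} (hn : 1 ≤ n) :
    ((reducedMatrix n).submatrix (cell n) (cell n)).det = 0 :=
  det_zero_of_row_eq (i := ⟨1, by omega⟩) (j := ⟨2, by omega⟩) (by simp) rfl

theorem smul_one_add_reducedMatrix_mul_diagonal (n : ℕ) :
    (8 * (n : ℂ) - 3) • 1 + reducedMatrix n * diagonal (fun j => ((![1, 1, n] j : ℕ) : ℂ)) =
      !![4 * (n : ℂ) - 2, -(2 * (n : ℂ) - 2), -2 * (n : ℂ);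
         -1, 4 * (n : ℂ) + 1, -4 * (n : ℂ);
         -1, -2 * (2 * (n : ℂ) - 2), 4 * (n : ℂ) - 3] := by
  ext i j
  rw [Matrix.add_apply, Matrix.smul_apply, mul_diagonal, one_apply]
  fin_cases i <;> fin_cases j <;> simp [reducedMatrix] <;> ring

/-- The `(n+2) × (n+2)` matrix `M` from Proposition 2.5 has an equitable quotient
matrix `Q` of order 3 (for the partition `{{0},{1},{2,…,n+1}}`) whose spectrum
equals the spectrum of `M`; i.e. `Q` contains all the distinct eigenvalues of `M`. -/
theorem quotient_contains_all_eigenvalues_special (n : ℕ) (hn : 1 ≤ n)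
    (M : Matrix (Fin (n + 2)) (Fin (n + 2)) ℂ)
    (hM : ∀ i j : Fin (n + 2), M i j =
      if i.val = 0 then
        (if j.val = 0 then 4 * (n : ℂ) - 2
         else if j.val = 1 then -(2 * (n : ℂ) - 2) else -2)
      else if i.val = 1 then
        (if j.val = 0 then -1 else if j.val = 1 then 4 * (n : ℂ) + 1 else -4)
      else
        (if j.val = 0 then -1
         else if j.val = 1 then -2 * (2 * (n : ℂ) - 2)
         else if j = i then 8 * (n : ℂ) - 7 else -4))
    (P : Matrix (Fin (n + 2)) (Fin 3) ℂ)
    (hP : ∀ i j, P i j =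
      if (if i.val = 0 then (0 : ℕ) else if i.val = 1 then 1 else 2) = j.val then 1 else 0)
    (Q : Matrix (Fin 3) (Fin 3) ℂ)
    (hQ : Q = !![4 * (n : ℂ) - 2, -(2 * (n : ℂ) - 2), -2 * (n : ℂ);
                 -1, 4 * (n : ℂ) + 1, -4 * (n : ℂ);
                 -1, -2 * (2 * (n : ℂ) - 2), 4 * (n : ℂ) - 3]) :
    M * P = P * Q ∧ spectrum ℂ M = spectrum ℂ Q := by
  have hP' : P = (1 : Matrix (Fin 3) (Fin 3) ℂ).submatrix (cell n) id := by
    ext i j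
    simp only [hP, submatrix_apply, id, one_apply, ← Fin.val_inj, val_cell]
  have hM' : M = (8 * (n : ℂ) - 3) • 1 + P * (reducedMatrix n * Pᵀ) := by
    rw [hP', one_submatrix_mul_mul_transpose]
    ext ⟨i, hi⟩ ⟨j, hj⟩
    rw [hM, Matrix.add_apply, Matrix.smul_apply, one_apply, submatrix_apply]
    rcases i with _ | _ | i <;> rcases j with _ | _ | j <;> simp [cell, reducedMatrix] <;>
      (try split_ifs) <;> first | omega | ring
  have hQ' : Q = (8 * (n : ℂ) - 3) • 1 + reducedMatrix n * Pᵀ * P := by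
    rw [Matrix.mul_assoc, hP', transpose_one_submatrix_mul_self, hQ]
    simp only [card_cell_eq, smul_one_add_reducedMatrix_mul_diagonal]
  have hdet : (P * (reducedMatrix n * Pᵀ)).det = 0 ↔ (reducedMatrix n * Pᵀ * P).det = 0 := by
    rw [hP', one_submatrix_mul_mul_transpose, Matrix.mul_assoc, det_mul, det_reducedMatrix]
    exact iff_of_true (det_submatrix_cell_reducedMatrix hn) (zero_mul _)
  rw [hM', hQ']
  exact ⟨smul_one_add_mul_mul_comm _ P _, spectrum_smul_one_add_mul_comm _ _ _ hdet⟩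
end

section
/- Let n ≥ 2 and let M be the n×n complex matrix with indices 0,…,n−1 defined by: M 0 0 = 1, M 0 j = −2 for j ≥ 1, M i 0 = 2 for i ≥ 1, M i i = 5 for i ≥ 1, and M i j = 2 for i, j ≥ 1 with i ≠ j (i.e., M = fromBlocks with (1,1)-block the 1×1 matrix (1), upper-right block −2·(all-ones row), lower-left block 2·(all-ones column), and lower-right block 5·I + 2·(J − I) of order n−1). Let P be the characteristic matrix of the partition {{0},{1,…,n−1}} and Q = !![1, −2(n−1); 2, 2n+1]. Then M * P = P * Q, the characteristic polynomial of M is M.charpoly = (X − C 3)^(n−1) * (X − C (2n−1)), and spectrum ℂ M = spectrum ℂ Q = {3, 2n−1}. Thus the smallest equitable quotient matrix Q contains all the distinct eigenvalues of M. -/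
/-!
Both matrices are rank-one perturbations of `3 • 1`: with `w = (-2, 2)` one has
`M = 3 • 1 + (P w) 1ᵀ` and `Q = 3 • 1 + w (1ᵀ P)`, whence `M P = P Q` for any `P`.
A scalar `c` plus a rank-one matrix `u vᵀ` of order `k` has characteristic polynomial
`(X - c)^(k-1) (X - c - vᵀu)`, and the two traces `1ᵀ (P w)` and `(1ᵀ P) w` agree,
so `M` and `Q` have the same eigenvalues `3` and `3 + (2n - 4)`.
-/

open Polynomial Matrix

namespace Matrix

variable {ι κ R : Type*} [Fintype ι] [DecidableEq ι] [Fintype κ] [DecidableEq κ] [CommRing R]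

theorem scalar_add_vecMulVec_mul_eq_mul (P : Matrix ι κ R) (c : R) (w : κ → R) :
    (scalar ι c + vecMulVec (P *ᵥ w) 1) * P = P * (scalar κ c + vecMulVec w (1 ᵥ* P)) := by
  rw [Matrix.add_mul, Matrix.mul_add, vecMulVec_mul, mul_vecMulVec, add_left_inj]
  ext i j
  simp [mul_comm]

theorem charpoly_scalar_add_vecMulVec [Nonempty ι] (c : R) (u v : ι → R) :
    (scalar ι c + vecMulVec u v).charpoly =
      (X - C c) ^ (Fintype.card ι - 1) * (X - C (c + u ⬝ᵥ v)) := by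
  have hcard : Fintype.card ι = Fintype.card ι - 1 + 1 :=
    (Nat.sub_add_cancel Fintype.card_pos).symm
  have hshift := charpoly_sub_scalar (vecMulVec u v) (-c)
  rw [map_neg, sub_neg_eq_add, add_comm, charpoly_vecMulVec] at hshift
  rw [hshift, hcard, pow_succ, Nat.add_sub_cancel]
  simp only [smul_eq_C_mul, map_neg, sub_comp, mul_comp, pow_comp, X_comp, C_comp, map_add]
  ring

theorem spectrum_scalar_add_vecMulVec {K : Type*} [Field K] [Nontrivial ι] (c : K) (u v : ι → K) :
    spectrum K (scalar ι c + vecMulVec u v) = {c, c + u ⬝ᵥ v} := by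
  have hcard : Fintype.card ι - 1 ≠ 0 := by have := Fintype.one_lt_card (α := ι); omega
  ext μ
  rw [mem_spectrum_iff_isRoot_charpoly, charpoly_scalar_add_vecMulVec]
  simp [hcard, sub_eq_zero]

end Matrix

/-- The `n × n` matrix `M` built from the blocks `(1)`, `-2·J`, `2·J`, `5·I + 2(J - I)`
has equitable quotient `Q = !![1, -2(n-1); 2, 2n+1]` for the partition
`{{0},{1,…,n-1}}`, characteristic polynomial `(X - 3)^(n-1) (X - (2n-1))`, and its
spectrum coincides with that of `Q`, namely `{3, 2n-1}`. -/
theorem smallest_quotient_two_distinct_eigenvalues (n : ℕ) (hn : 2 ≤ n)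
    (M : Matrix (Fin n) (Fin n) ℂ)
    (hM : ∀ i j : Fin n, M i j =
      if i.val = 0 then (if j.val = 0 then 1 else -2)
      else (if j.val = 0 then 2 else if i = j then 5 else 2))
    (P : Matrix (Fin n) (Fin 2) ℂ)
    (hP : ∀ i j, P i j =
      if (if i.val = 0 then (0 : ℕ) else 1) = j.val then 1 else 0)
    (Q : Matrix (Fin 2) (Fin 2) ℂ)
    (hQ : Q = !![1, -2 * ((n : ℂ) - 1); 2, 2 * (n : ℂ) + 1]) :
    M * P = P * Q ∧
      M.charpoly = (X - C 3) ^ (n - 1) * (X - C (2 * (n : ℂ) - 1)) ∧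
      spectrum ℂ M = spectrum ℂ Q ∧
      spectrum ℂ M = {3, 2 * (n : ℂ) - 1} := by
  have : Nontrivial (Fin n) := Fin.nontrivial_iff_two_le.mpr hn
  set w : Fin 2 → ℂ := ![-2, 2]
  have hPw : P *ᵥ w = fun i => if i.val = 0 then -2 else 2 := by
    ext i
    by_cases hi : i.val = 0 <;> simp [mulVec, dotProduct, Fin.sum_univ_two, hP, hi, w]
  have hcells : 1 ᵥ* P = ![1, (n : ℂ) - 1] := by
    obtain ⟨m, rfl⟩ : ∃ m, n = m + 1 := ⟨n - 1, by omega⟩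
    ext j
    fin_cases j <;> simp [vecMul, dotProduct, Fin.sum_univ_succ, hP]
  have hM' : M = scalar (Fin n) 3 + vecMulVec (P *ᵥ w) 1 := by
    ext i j
    rw [hM, hPw]
    rcases eq_or_ne i j with rfl | hij
    · by_cases hi : i.val = 0 <;> simp [hi] <;> norm_num
    · have hnot_both : ¬(i.val = 0 ∧ j.val = 0) := fun h => hij (Fin.ext (h.1.trans h.2.symm))
      by_cases hi : i.val = 0 <;> by_cases hj : j.val = 0 <;> simp_all [diagonal_apply_ne]
  have hQ' : Q = scalar (Fin 2) 3 + vecMulVec w (1 ᵥ* P) := by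
    rw [hQ, hcells]
    ext i j
    fin_cases i <;> fin_cases j <;> simp [w] <;> ring
  have hdot : (P *ᵥ w) ⬝ᵥ 1 = w ⬝ᵥ (1 ᵥ* P) := by
    rw [dotProduct_comm, dotProduct_mulVec, dotProduct_comm]
  have heig : 3 + w ⬝ᵥ (1 ᵥ* P) = 2 * (n : ℂ) - 1 := by
    rw [hcells]
    simp only [dotProduct, Fin.sum_univ_two, cons_val_zero, cons_val_one, cons_val_fin_one, mul_one, w]
    ring
  refine ⟨?_, ?_, ?_, ?_⟩
  · rw [hM', hQ']
    exact scalar_add_vecMulVec_mul_eq_mul P 3 w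
  · rw [hM', charpoly_scalar_add_vecMulVec, hdot, heig, Fintype.card_fin]
  · rw [hM', hQ', spectrum_scalar_add_vecMulVec, spectrum_scalar_add_vecMulVec, hdot]
  · rw [hM', spectrum_scalar_add_vecMulVec, hdot, heig]
end

section
/- Let n ≥ 3 and let c11, c12, c21, c22, α be complex numbers. Let M be the n×n complex matrix given in block form by M = fromBlocks (the 1×1 matrix (c11)) ((c12/(n−1)) • (all-ones 1×(n−1) row)) (c21 • (all-ones (n−1)×1 column)) (α • I_{n−1} + ((c22−α)/(n−1)) • J_{n−1}), where I is the identity and J the all-ones matrix. Let P be the characteristic matrix of the partition {{0},{1,…,n−1}} and Q = !![c11, c12; c21, c22]. Then M * P = P * Q, and M.charpoly = (X − C α)^(n−2) * Q.charpoly. In particular, if Q.charpoly = (X − C α) * (X − C β) with α ≠ β, then M.charpoly = (X − C α)^(n−1) * (X − C β), so M has exactly two distinct eigenvalues α (of multiplicity n−1) and β (simple), and the equitable quotient matrix Q of order 2 contains both of them. -/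
open Polynomial Matrix

/-! The partition `{{0}, {1, …, n-1}}` is equitable because all rows of `α • I + γ • J` have
the same sum `α + (n-1) γ`. For the characteristic polynomial, compute the determinant of the
characteristic matrix over the field of rational functions, where its corner entry `X - c11` is
invertible: the Schur complement is again of the form `r • I + g • J` (of size `n - 1`), whose
determinant `r ^ (n-2) * (r + (n-1) g)` is given by the matrix determinant lemma, and what comes out
is `(X - α) ^ (n-2)` times the determinant of the characteristic matrix of the quotient. -/

section

variable {R : Type*} [CommRing R] {m : ℕ}

def twoCellMatrix (a b c r g : R) (m : ℕ) : Matrix (Fin 1 ⊕ Fin m) (Fin 1 ⊕ Fin m) R :=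
  fromBlocks (of fun _ _ => a) (of fun _ _ => b) (of fun _ _ => c) (r • 1 + g • of fun _ _ => 1)

def twoCellQuotient (a b c r g : R) (m : ℕ) : Matrix (Fin 2) (Fin 2) R :=
  !![a, m * b; c, r + m * g]

variable (R) in
def twoCellIndicator (m : ℕ) : Matrix (Fin 1 ⊕ Fin m) (Fin 2) R :=
  of fun i j => Sum.elim (fun _ => if j = 0 then 1 else 0) (fun _ => if j = 1 then 1 else 0) i

theorem twoCellMatrix_mul_twoCellIndicator (a b c r g : R) :
    twoCellMatrix a b c r g m * twoCellIndicator R m =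
      twoCellIndicator R m * twoCellQuotient a b c r g m := by
  ext (i | i) j <;> fin_cases j <;>
    simp [twoCellMatrix, twoCellQuotient, twoCellIndicator, mul_apply, one_apply,
      Finset.sum_add_distrib]

theorem twoCellMatrix_map {S : Type*} [CommRing S] (f : R →+* S) (a b c r g : R) :
    (twoCellMatrix a b c r g m).map f = twoCellMatrix (f a) (f b) (f c) (f r) (f g) m := by
  ext (i | i) (j | j) <;> simp [twoCellMatrix, one_apply, apply_ite f]

theorem twoCellQuotient_map {S : Type*} [CommRing S] (f : R →+* S) (a b c r g : R) :
    (twoCellQuotient a b c r g m).map f = twoCellQuotient (f a) (f b) (f c) (f r) (f g) m := by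
  ext i j; fin_cases i <;> fin_cases j <;> simp [twoCellQuotient]

theorem charmatrix_twoCellMatrix (a b c r g : R) :
    charmatrix (twoCellMatrix a b c r g m) =
      twoCellMatrix (X - C a) (-C b) (-C c) (X - C r) (-C g) m := by
  ext (i | i) (j | j) : 1
  · simp [twoCellMatrix, Subsingleton.elim i j]
  · simp [twoCellMatrix]
  · simp [twoCellMatrix]
  · by_cases h : i = j
    · simp [twoCellMatrix, h, sub_add_eq_sub_sub, ← sub_eq_add_neg]
    · simp [twoCellMatrix, one_apply, h]

theorem charmatrix_twoCellQuotient (a b c r g : R) :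
    charmatrix (twoCellQuotient a b c r g m) =
      twoCellQuotient (X - C a) (-C b) (-C c) (X - C r) (-C g) m := by
  ext i j : 1
  fin_cases i <;> fin_cases j <;> simp [twoCellQuotient, sub_add_eq_sub_sub, ← sub_eq_add_neg]

end

section Field

variable {K : Type*} [Field K] {m : ℕ}

theorem det_smul_one_add_smul_of_one (hm : m ≠ 0) {r : K} (hr : r ≠ 0) (g : K) :
    (r • (1 : Matrix (Fin m) (Fin m) K) + g • of fun _ _ => 1).det =
      r ^ (m - 1) * (r + m * g) := by
  have hrank_one : r • (1 : Matrix (Fin m) (Fin m) K) + g • of (fun _ _ => 1) =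
      r • (1 + replicateCol (Fin 1) (fun _ : Fin m => g / r) *
        replicateRow (Fin 1) fun _ => (1 : K)) := by
    ext i j
    by_cases h : i = j <;> simp [one_apply, h, mul_add, mul_apply, mul_div_cancel₀ _ hr]
  rw [hrank_one, det_smul, det_one_add_mul_comm, det_unique, Fintype.card_fin, Matrix.add_apply,
    one_apply_eq, replicateRow_mul_replicateCol_apply]
  simp only [dotProduct, one_mul, Finset.sum_const, Finset.card_univ, Fintype.card_fin,
    nsmul_eq_mul]
  obtain ⟨k, rfl⟩ := Nat.exists_eq_succ_of_ne_zero hm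
  rw [Nat.succ_sub_one, pow_succ]
  field_simp

theorem det_twoCellMatrix (hm : m ≠ 0) {a r : K} (ha : a ≠ 0) (hr : r ≠ 0) (b c g : K) :
    (twoCellMatrix a b c r g m).det = r ^ (m - 1) * (twoCellQuotient a b c r g m).det := by
  let : Invertible (of fun (_ : Fin 1) (_ : Fin 1) => a) :=
    ⟨of fun _ _ => a⁻¹, by ext i j; simp [mul_apply, ha, one_apply, Subsingleton.elim i j],
      by ext i j; simp [mul_apply, ha, one_apply, Subsingleton.elim i j]⟩
  calc (twoCellMatrix a b c r g m).det
    _ = a * (r • 1 + (g - c / a * b) • of fun _ _ => 1 : Matrix (Fin m) (Fin m) K).det := by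
      rw [twoCellMatrix, det_fromBlocks₁₁, det_unique]
      congr 2
      ext i j
      by_cases h : i = j <;> simp [h, one_apply, mul_apply, add_sub_assoc, div_eq_mul_inv]
    _ = r ^ (m - 1) * (twoCellQuotient a b c r g m).det := by
      rw [det_smul_one_add_smul_of_one hm hr, det_fin_two]
      simp only [twoCellQuotient, of_apply, cons_val', cons_val_zero, cons_val_fin_one,
        cons_val_one]
      field_simp
      ring

theorem charpoly_twoCellMatrix (hm : m ≠ 0) (a b c r g : K) :
    (twoCellMatrix a b c r g m).charpoly =
      (X - C r) ^ (m - 1) * (twoCellQuotient a b c r g m).charpoly := by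
  let φ := algebraMap K[X] (RatFunc K)
  have hφ : Function.Injective φ := IsFractionRing.injective K[X] (RatFunc K)
  have hφ_ne (s : K) : φ (X - C s) ≠ 0 := (map_ne_zero_iff φ hφ).2 (X_sub_C_ne_zero s)
  apply hφ
  rw [charpoly, charpoly, map_mul, map_pow, RingHom.map_det, RingHom.map_det,
    RingHom.mapMatrix_apply, RingHom.mapMatrix_apply, charmatrix_twoCellMatrix,
    charmatrix_twoCellQuotient, twoCellMatrix_map, twoCellQuotient_map,
    det_twoCellMatrix hm (hφ_ne a) (hφ_ne r)]

end Field

/-- Theorem 3.4: the `n × n` block matrix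
`M = fromBlocks (c11) ((c12/(n-1)) J) (c21 J) (α I + ((c22-α)/(n-1)) J)` has
equitable quotient `Q = !![c11, c12; c21, c22]` for the partition `{{0},{1,…,n-1}}`
and `charpoly M = (X-α)^(n-2) · charpoly Q`; in particular if
`charpoly Q = (X-α)(X-β)` with `α ≠ β`, then `charpoly M = (X-α)^(n-1)(X-β)`,
so `M` has exactly the two distinct eigenvalues `α` (multiplicity `n-1`) and `β`. -/
theorem n_by_n_quotient_two_eigenvalues (n : ℕ) (hn : 3 ≤ n)
    (c11 c12 c21 c22 α : ℂ)
    (M : Matrix (Fin 1 ⊕ Fin (n - 1)) (Fin 1 ⊕ Fin (n - 1)) ℂ)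
    (hM : M = Matrix.fromBlocks
      (Matrix.of fun (_ : Fin 1) (_ : Fin 1) => c11)
      (Matrix.of fun (_ : Fin 1) (_ : Fin (n - 1)) => c12 / ((n : ℂ) - 1))
      (Matrix.of fun (_ : Fin (n - 1)) (_ : Fin 1) => c21)
      (α • (1 : Matrix (Fin (n - 1)) (Fin (n - 1)) ℂ) +
        ((c22 - α) / ((n : ℂ) - 1)) • Matrix.of fun _ _ => (1 : ℂ)))
    (P : Matrix (Fin 1 ⊕ Fin (n - 1)) (Fin 2) ℂ)
    (hP : ∀ i j, P i j =
      Sum.elim (fun _ => if j = 0 then (1 : ℂ) else 0)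
               (fun _ => if j = 1 then (1 : ℂ) else 0) i)
    (Q : Matrix (Fin 2) (Fin 2) ℂ)
    (hQ : Q = !![c11, c12; c21, c22]) :
    M * P = P * Q ∧
      M.charpoly = (X - C α) ^ (n - 2) * Q.charpoly ∧
      ∀ β : ℂ, α ≠ β → Q.charpoly = (X - C α) * (X - C β) →
        M.charpoly = (X - C α) ^ (n - 1) * (X - C β) := by
  have hcast : ((n - 1 : ℕ) : ℂ) = (n : ℂ) - 1 := by
    rw [Nat.cast_sub (by omega), Nat.cast_one]
  have hn1 : (n : ℂ) - 1 ≠ 0 := by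
    rw [← hcast]
    exact_mod_cast (by omega : n - 1 ≠ 0)
  have hQ_eq : Q = twoCellQuotient c11 (c12 / ((n : ℂ) - 1)) c21 α ((c22 - α) / ((n : ℂ) - 1))
      (n - 1) := by
    rw [hQ, twoCellQuotient, hcast, mul_div_cancel₀ _ hn1, mul_div_cancel₀ _ hn1,
      add_sub_cancel]
  have hcharpoly : M.charpoly = (X - C α) ^ (n - 2) * Q.charpoly := by
    rw [hM, hQ_eq, show n - 2 = n - 1 - 1 by omega]
    exact charpoly_twoCellMatrix (by omega) ..
  refine ⟨?_, hcharpoly, fun β _ hβ => ?_⟩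
  · rw [hM, Matrix.ext hP, hQ_eq]
    exact twoCellMatrix_mul_twoCellIndicator ..
  · rw [hcharpoly, hβ, ← mul_assoc, ← pow_succ, show n - 2 + 1 = n - 1 by omega]
end

section
/- Let n ≥ 3, let c11, c12, c21, c22, α be complex numbers, and let M be an n×n complex matrix written in block form M = fromBlocks (the 1×1 matrix (m11)) (row vector r of length n−1) (column vector s of length n−1) (an (n−1)×(n−1) matrix B). Suppose the partition {{0},{1,…,n−1}} with characteristic matrix P is equitable for M with quotient Q = !![c11, c12; c21, c22] (i.e., M * P = P * Q), and suppose that for every vector y : Fin (n−1) → ℂ with ∑ j, y j = 0 the vector (0, y) is an eigenvector of M for the eigenvalue α, i.e., r ⬝ᵥ y = 0 and B *ᵥ y = α • y. Then necessarily r j = c12/(n−1) for every j, and B = α • I_{n−1} + ((c22−α)/(n−1)) • J_{n−1}, where I is the identity and J the all-ones matrix. -/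
/-!
Against the all-ones vector, equitability says that `r` sums to `c12` and every row of `B` sums
to `c22`. For each index `j`, the vector `eⱼ - (1/(n-1)) 𝟙` has coordinate sum zero, so it is
annihilated by `r` and scaled by `α` under `B`; reading off coordinates gives
`r j = c12/(n-1)` and the `j`-th column `B eⱼ = α eⱼ + ((c22 - α)/(n-1)) 𝟙`.
-/

open Matrix

theorem sums_eq_of_equitable {K ι : Type*} [Semiring K] [Fintype ι]
    {c11 c12 c21 c22 m11 : K} {r s : ι → K} {B : Matrix ι ι K}
    {M : Matrix (Fin 1 ⊕ ι) (Fin 1 ⊕ ι) K}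
    (hM : M = fromBlocks (of fun _ _ => m11) (of fun _ j => r j) (of fun i _ => s i) B)
    {P : Matrix (Fin 1 ⊕ ι) (Fin 2) K}
    (hP : ∀ i j, P i j =
      Sum.elim (fun _ => if j = 0 then (1 : K) else 0) (fun _ => if j = 1 then (1 : K) else 0) i)
    {Q : Matrix (Fin 2) (Fin 2) K} (hQ : Q = !![c11, c12; c21, c22]) (hEquit : M * P = P * Q) :
    ∑ j, r j = c12 ∧ ∀ i, ∑ j, B i j = c22 := by
  constructor
  · simpa [hM, hP, hQ, mul_apply, Fintype.sum_sum_type] using congrFun₂ hEquit (Sum.inl 0) 1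
  · intro i
    simpa [hM, hP, hQ, mul_apply, Fintype.sum_sum_type] using congrFun₂ hEquit (Sum.inr i) 1

section SumZeroEigenvectors

variable {K ι : Type*} [Field K] [Fintype ι] [DecidableEq ι]

theorem sum_single_sub_const_inv_card (hι : (Fintype.card ι : K) ≠ 0) (j : ι) :
    ∑ i, (Pi.single j 1 - fun _ => (Fintype.card ι : K)⁻¹ : ι → K) i = 0 := by
  simp [hι]

theorem eq_div_card_of_dotProduct_eq_zero (hι : (Fintype.card ι : K) ≠ 0) {r : ι → K} {c : K}
    (hsum : ∑ j, r j = c) (hr : ∀ y : ι → K, ∑ j, y j = 0 → r ⬝ᵥ y = 0) (j : ι) :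
    r j = c / Fintype.card ι := by
  have h := hr _ (sum_single_sub_const_inv_card hι j)
  rw [dotProduct_sub, dotProduct_single_one, sub_eq_zero] at h
  rw [h, div_eq_mul_inv, ← hsum, dotProduct, Finset.sum_mul]

theorem eq_smul_one_add_smul_of_mulVec_eq (hι : (Fintype.card ι : K) ≠ 0)
    {B : Matrix ι ι K} {α c : K} (hsum : ∀ i, ∑ j, B i j = c)
    (hB : ∀ y : ι → K, ∑ j, y j = 0 → B *ᵥ y = α • y) :
    B = α • (1 : Matrix ι ι K) + ((c - α) / Fintype.card ι) • of fun _ _ => (1 : K) := by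
  ext i j
  have h := congrFun (hB _ (sum_single_sub_const_inv_card hι j)) i
  rw [mulVec_sub, mulVec_single_one] at h
  simp only [Pi.sub_apply, col_apply, mulVec, dotProduct, ← Finset.sum_mul, hsum, Pi.smul_apply,
    Pi.single_apply, smul_eq_mul] at h
  simp only [smul_of, Matrix.add_apply, Matrix.smul_apply, one_apply, smul_eq_mul, mul_ite, mul_one, mul_zero,
    of_apply, Pi.smul_apply]
  split_ifs at h ⊢ <;> linear_combination h

end SumZeroEigenvectors

/-- Uniqueness part of Theorem 3.4: if the partition `{{0},{1,…,n-1}}` is equitable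
for `M = fromBlocks (m11) r s B` with quotient `Q = !![c11, c12; c21, c22]`, and
every sum-zero vector `y` yields an eigenvector `(0, y)` of `M` for `α`
(i.e. `r ⬝ᵥ y = 0` and `B *ᵥ y = α • y`), then `r` is the constant vector
`c12/(n-1)` and `B = α I + ((c22-α)/(n-1)) J`. -/
theorem n_by_n_two_eigenvalues_unique_form (n : ℕ) (hn : 3 ≤ n)
    (c11 c12 c21 c22 α m11 : ℂ)
    (r s : Fin (n - 1) → ℂ)
    (B : Matrix (Fin (n - 1)) (Fin (n - 1)) ℂ)
    (M : Matrix (Fin 1 ⊕ Fin (n - 1)) (Fin 1 ⊕ Fin (n - 1)) ℂ)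
    (hM : M = Matrix.fromBlocks
      (Matrix.of fun (_ : Fin 1) (_ : Fin 1) => m11)
      (Matrix.of fun (_ : Fin 1) j => r j)
      (Matrix.of fun i (_ : Fin 1) => s i) B)
    (P : Matrix (Fin 1 ⊕ Fin (n - 1)) (Fin 2) ℂ)
    (hP : ∀ i j, P i j =
      Sum.elim (fun _ => if j = 0 then (1 : ℂ) else 0)
               (fun _ => if j = 1 then (1 : ℂ) else 0) i)
    (Q : Matrix (Fin 2) (Fin 2) ℂ)
    (hQ : Q = !![c11, c12; c21, c22])
    (hEquit : M * P = P * Q)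
    (hEig : ∀ y : Fin (n - 1) → ℂ, (∑ j, y j) = 0 → r ⬝ᵥ y = 0 ∧ B *ᵥ y = α • y) :
    (∀ j, r j = c12 / ((n : ℂ) - 1)) ∧
      B = α • (1 : Matrix (Fin (n - 1)) (Fin (n - 1)) ℂ) +
        ((c22 - α) / ((n : ℂ) - 1)) • Matrix.of (fun _ _ => (1 : ℂ)) := by
  obtain ⟨hr, hB⟩ := sums_eq_of_equitable hM hP hQ hEquit
  have hcard : (Fintype.card (Fin (n - 1)) : ℂ) = (n : ℂ) - 1 := by
    rw [Fintype.card_fin, Nat.cast_pred (by omega)]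
  have hcard_ne : (Fintype.card (Fin (n - 1)) : ℂ) ≠ 0 := by
    rw [Fintype.card_fin, Nat.cast_ne_zero]
    omega
  rw [← hcard]
  exact ⟨eq_div_card_of_dotProduct_eq_zero hcard_ne hr fun y hy => (hEig y hy).1,
    eq_smul_one_add_smul_of_mulVec_eq hcard_ne hB fun y hy => (hEig y hy).2⟩
end

section
/- Let n and k be positive integers, let M be an n×n complex matrix, let f : Fin n → Fin k be a surjective map with characteristic matrix P defined by P i j = 1 if f i = j and 0 otherwise, and let Q be a k×k complex matrix with M * P = P * Q. Then for every λ ∈ ℂ: λ ∈ spectrum ℂ Q if and only if there exists a nonzero vector x : Fin n → ℂ lying in the column space of P (i.e., x = P *ᵥ y for some y : Fin k → ℂ) such that M *ᵥ x = λ • x. Equivalently, λ is an eigenvalue of the equitable quotient Q if and only if M has an eigenvector for λ whose entries are constant on each cell of the partition. -/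
/-!
Since `f` is surjective, `y ↦ P *ᵥ y = y ∘ f` is injective, and `M * P = P * Q` makes it
intertwine `Q` with `M`; hence it maps the `λ`-eigenvectors of `Q` bijectively onto the
`λ`-eigenvectors of `M` lying in the column space of `P`.
-/

open Matrix

theorem Matrix.mem_spectrum_iff_exists_mulVec_eq_smul {n K : Type*} [Fintype n] [DecidableEq n]
    [Field K] (A : Matrix n n K) (μ : K) :
    μ ∈ spectrum K A ↔ ∃ v ≠ 0, A *ᵥ v = μ • v := by
  rw [← spectrum_toLin', ← Module.End.hasEigenvalue_iff_mem_spectrum,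
    Module.End.hasEigenvalue_iff]
  simp only [Submodule.ne_bot_iff, Module.End.mem_eigenspace_iff, toLin'_apply]
  exact ⟨fun ⟨v, hv, hv0⟩ => ⟨v, hv0, hv⟩, fun ⟨v, hv0, hv⟩ => ⟨v, hv, hv0⟩⟩

section CharacteristicMatrix

variable {m n R : Type*} [Fintype n] [DecidableEq n] [NonAssocSemiring R]
  {f : m → n} {P : Matrix m n R}

theorem Matrix.mulVec_eq_comp_of_apply_eq_ite_s12 (hP : ∀ i j, P i j = if f i = j then 1 else 0)
    (y : n → R) : P *ᵥ y = y ∘ f := by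
  ext i
  simp [mulVec, dotProduct, hP]

theorem Matrix.mulVec_injective_of_apply_eq_ite (hP : ∀ i j, P i j = if f i = j then 1 else 0)
    (hf : Function.Surjective f) : Function.Injective (P *ᵥ ·) := by
  simpa only [mulVec_eq_comp_of_apply_eq_ite_s12 hP] using hf.injective_comp_right

end CharacteristicMatrix

theorem Matrix.mulVec_eq_smul_iff_of_mul_eq_mul {m n R : Type*} [Fintype m] [Fintype n]
    [CommSemiring R] {M : Matrix m m R} {P : Matrix m n R} {Q : Matrix n n R}
    (hQ : M * P = P * Q) (hP : Function.Injective (P *ᵥ ·)) (μ : R) (y : n → R) :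
    M *ᵥ (P *ᵥ y) = μ • (P *ᵥ y) ↔ Q *ᵥ y = μ • y := by
  rw [mulVec_mulVec, hQ, ← mulVec_mulVec, ← mulVec_smul]
  exact hP.eq_iff

theorem quotient_eigenvalue_iff_eigenvector_in_columnSpace_general
    (n k : ℕ)
    (M : Matrix (Fin n) (Fin n) ℂ)
    (f : Fin n → Fin k) (hf : Function.Surjective f)
    (P : Matrix (Fin n) (Fin k) ℂ)
    (hP : ∀ i j, P i j = if f i = j then 1 else 0)
    (Q : Matrix (Fin k) (Fin k) ℂ)
    (hQ : M * P = P * Q) (lam : ℂ) :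
    lam ∈ spectrum ℂ Q ↔
      ∃ x : Fin n → ℂ, x ≠ 0 ∧ (∃ y : Fin k → ℂ, x = P *ᵥ y) ∧ M *ᵥ x = lam • x := by
  have hPinj := mulVec_injective_of_apply_eq_ite hP hf
  have eigen_iff := mulVec_eq_smul_iff_of_mul_eq_mul hQ hPinj lam
  rw [mem_spectrum_iff_exists_mulVec_eq_smul]
  constructor
  · rintro ⟨y, hy0, hy⟩
    refine ⟨P *ᵥ y, fun h => hy0 (hPinj ?_), ⟨y, rfl⟩, (eigen_iff y).2 hy⟩
    simpa only [mulVec_zero] using h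
  · rintro ⟨_, hx0, ⟨y, rfl⟩, hx⟩
    refine ⟨y, ?_, (eigen_iff y).1 hx⟩
    rintro rfl
    exact hx0 (mulVec_zero P)

/-- Theorem 4.2 (1): `λ` is an eigenvalue of the equitable quotient `Q` if and only
if `M` has a nonzero eigenvector for `λ` in the column space of the characteristic
matrix `P`, i.e. an eigenvector constant on each cell of the partition. -/
theorem quotient_eigenvalue_iff_eigenvector_in_columnSpace
    (n k : ℕ) (hn : 0 < n) (hk : 0 < k)
    (M : Matrix (Fin n) (Fin n) ℂ)
    (f : Fin n → Fin k) (hf : Function.Surjective f)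
    (P : Matrix (Fin n) (Fin k) ℂ)
    (hP : ∀ i j, P i j = if f i = j then 1 else 0)
    (Q : Matrix (Fin k) (Fin k) ℂ)
    (hQ : M * P = P * Q) (lam : ℂ) :
    lam ∈ spectrum ℂ Q ↔
      ∃ x : Fin n → ℂ, x ≠ 0 ∧ (∃ y : Fin k → ℂ, x = P *ᵥ y) ∧ M *ᵥ x = lam • x :=
  quotient_eigenvalue_iff_eigenvector_in_columnSpace_general n k M f hf P hP Q hQ lam
end

section
/- Let M be a 4×4 complex matrix and λ₂ ∈ ℂ be such that the eigenspace {x : Fin 4 → ℂ | M *ᵥ x = λ₂ • x} has dimension 3 (i.e., the kernel of the linear map x ↦ M *ᵥ x − λ₂ • x has finrank 3). Let k ≥ 2, let f : Fin 4 → Fin k be a surjective map with characteristic matrix P defined by P i j = 1 if f i = j and 0 otherwise, and let Q be a k×k complex matrix with M * P = P * Q. Then λ₂ ∈ spectrum ℂ Q; that is, for any equitable partition with at least two cells, the eigenvalue of geometric multiplicity 3 automatically appears in the equitable quotient matrix. -/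
/-!
The column space of the characteristic matrix `P` is `k`-dimensional with `k ≥ 2`, and the
`λ₂`-eigenspace of `M` is `3`-dimensional, so inside `ℂ⁴` they share a nonzero vector `P y`.
Since `P` has full column rank, `M * P = P * Q` turns `M (P y) = λ₂ P y` into `Q y = λ₂ y`.
-/

open Matrix Module

theorem Submodule.exists_mem_inf_ne_zero_of_finrank_lt {K V : Type*} [DivisionRing K]
    [AddCommGroup V] [Module K V] [FiniteDimensional K V] {s t : Submodule K V}
    (h : finrank K V < finrank K s + finrank K t) : ∃ x ∈ s, x ∈ t ∧ x ≠ 0 := by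
  by_contra! hst
  exact h.not_ge <| Submodule.finrank_add_finrank_le_of_disjoint <|
    Submodule.disjoint_def.2 hst

namespace Matrix

variable {m n R K : Type*} [Fintype n]

section CharacteristicMatrix

variable [DecidableEq n] [NonAssocSemiring R] {f : m → n} {P : Matrix m n R}

theorem mulVec_eq_comp_of_eq_ite (hP : ∀ i j, P i j = if f i = j then 1 else 0) (y : n → R) :
    P *ᵥ y = y ∘ f := by
  ext i
  simp [mulVec, dotProduct, hP]

theorem mulVec_injective_of_eq_ite (hf : Function.Surjective f)
    (hP : ∀ i j, P i j = if f i = j then 1 else 0) : Function.Injective P.mulVec :=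
  fun y z h => hf.injective_comp_right <| by
    rwa [mulVec_eq_comp_of_eq_ite hP, mulVec_eq_comp_of_eq_ite hP] at h

end CharacteristicMatrix

variable [Fintype m] [CommRing R] [Field K]

theorem mulVec_eq_smul_of_mul_eq_mul {M : Matrix m m R} {P : Matrix m n R} {Q : Matrix n n R}
    (hQ : M * P = P * Q) (hP : Function.Injective P.mulVec) {μ : R} {y : n → R}
    (hy : M *ᵥ (P *ᵥ y) = μ • P *ᵥ y) : Q *ᵥ y = μ • y :=
  hP <| by rw [mulVec_mulVec, ← hQ, ← mulVec_mulVec, hy, mulVec_smul]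

theorem mem_spectrum_of_mulVec_eq_smul_s14 [DecidableEq n] {Q : Matrix n n K} {μ : K} {y : n → K}
    (hy₀ : y ≠ 0) (hy : Q *ᵥ y = μ • y) : μ ∈ spectrum K Q := by
  rw [← spectrum_toLin', ← Module.End.hasEigenvalue_iff_mem_spectrum]
  exact Module.End.hasEigenvalue_of_hasEigenvector ⟨Module.End.mem_eigenspace_iff.2 hy, hy₀⟩

theorem mem_spectrum_of_mul_eq_mul_of_card_lt [DecidableEq n] {M : Matrix m m K}
    {P : Matrix m n K} {Q : Matrix n n K} (hQ : M * P = P * Q) (hP : Function.Injective P.mulVec)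
    {μ : K} (hμ : Fintype.card m <
      Fintype.card n + finrank K (LinearMap.ker (M.mulVecLin - μ • LinearMap.id))) :
    μ ∈ spectrum K Q := by
  have hrange : finrank K (LinearMap.range P.mulVecLin) = Fintype.card n := by
    rw [LinearMap.finrank_range_of_inj hP, finrank_fintype_fun_eq_card]
  obtain ⟨_, ⟨y, rfl⟩, hy, hy₀⟩ := Submodule.exists_mem_inf_ne_zero_of_finrank_lt
    (s := LinearMap.range P.mulVecLin) (t := LinearMap.ker (M.mulVecLin - μ • LinearMap.id))
    (by rwa [hrange, finrank_fintype_fun_eq_card])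
  have hMy : M *ᵥ (P *ᵥ y) = μ • P *ᵥ y := by
    rw [LinearMap.mem_ker, LinearMap.sub_apply, sub_eq_zero] at hy
    simpa using hy
  refine mem_spectrum_of_mulVec_eq_smul_s14 ?_ (mulVec_eq_smul_of_mul_eq_mul hQ hP hMy)
  rintro rfl
  exact hy₀ (mulVec_zero P)

end Matrix

/-- Proposition 4.1 (3): if a `4 × 4` complex matrix `M` has an eigenvalue `λ₂`
whose eigenspace has dimension `3`, then `λ₂` appears in the spectrum of the
equitable quotient matrix `Q` of any equitable partition with at least two cells. -/
theorem eigenvalue_of_geometric_multiplicity_three_in_quotient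
    (M : Matrix (Fin 4) (Fin 4) ℂ) (lam₂ : ℂ)
    (hdim : Module.finrank ℂ
      (LinearMap.ker (M.mulVecLin - lam₂ • LinearMap.id)) = 3)
    (k : ℕ) (hk : 2 ≤ k)
    (f : Fin 4 → Fin k) (hf : Function.Surjective f)
    (P : Matrix (Fin 4) (Fin k) ℂ)
    (hP : ∀ i j, P i j = if f i = j then 1 else 0)
    (Q : Matrix (Fin k) (Fin k) ℂ)
    (hQ : M * P = P * Q) :
    lam₂ ∈ spectrum ℂ Q :=
  mem_spectrum_of_mul_eq_mul_of_card_lt hQ (mulVec_injective_of_eq_ite hf hP) <| by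
    simp only [Fintype.card_fin, hdim]
    omega
end

section
/- Let G be a simple graph on a finite vertex type V and let S be a finite set of vertices of G with |S| ≥ 2, such that the vertices of S are pairwise adjacent (S is a clique) and any two vertices of S have the same neighbors outside each other (for all u, v ∈ S, G.neighborSet u \ {v} = G.neighborSet v \ {u}). Then the eigenspace of the adjacency matrix G.adjMatrix ℝ for the eigenvalue −1, i.e., the kernel of the linear map x ↦ (G.adjMatrix ℝ + 1) *ᵥ x, has dimension at least |S| − 1. In particular −1 is an eigenvalue of the adjacency matrix of G with multiplicity at least |S| − 1. -/
/-!
Adjacent twins `u, v` have the same closed neighbourhood, and the column of `A + I` at a vertex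
is the indicator of its closed neighbourhood. So all columns of `A + I` indexed by `S` coincide,
and for a fixed `v₀ ∈ S` the `|S| - 1` vectors `e_u - e_{v₀}` (`u ∈ S \ {v₀}`) lie in the
kernel. They are linearly independent because the standard basis vectors are affinely
independent.
-/

open Matrix

theorem Matrix.mulVec_single_one_sub_single_one_eq_zero {m n R : Type*} [Fintype n]
    [DecidableEq n] [Ring R] (M : Matrix m n R) {u v : n} (h : M.col u = M.col v) :
    M *ᵥ (Pi.single u 1 - Pi.single v 1) = 0 := by
  rw [mulVec_sub, mulVec_single_one, mulVec_single_one, h, sub_self]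

theorem Matrix.card_sub_one_le_finrank_ker_mulVecLin {m n K : Type*} [Fintype n]
    [DecidableEq n] [Field K] (M : Matrix m n K) (S : Finset n)
    (hS : ∀ u ∈ S, ∀ v ∈ S, M.col u = M.col v) :
    S.card - 1 ≤ Module.finrank K (LinearMap.ker M.mulVecLin) := by
  rcases S.eq_empty_or_nonempty with rfl | ⟨v₀, hv₀⟩
  · simp
  let w₀ : S := ⟨v₀, hv₀⟩
  have hli : LinearIndependent K fun u : {u : S // u ≠ w₀} =>
      (Pi.single (u : n) 1 - Pi.single v₀ 1 : n → K) := by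
    have hsingle : LinearIndependent K fun u : S => (Pi.single (u : n) 1 : n → K) :=
      (Pi.linearIndependent_single_one n K).comp _ Subtype.val_injective
    simpa only [vsub_eq_sub] using
      (affineIndependent_iff_linearIndependent_vsub K _ w₀).mp hsingle.affineIndependent
  have hker : LinearIndependent K fun u : {u : S // u ≠ w₀} =>
      (⟨_, M.mulVec_single_one_sub_single_one_eq_zero (hS _ u.1.2 v₀ hv₀)⟩ :
        LinearMap.ker M.mulVecLin) :=
    .of_comp (LinearMap.ker M.mulVecLin).subtype hli
  simpa [Fintype.card_subtype_compl] using hker.fintype_card_le_finrank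

theorem SimpleGraph.insert_neighborSet_eq_of_adj {V : Type*} {G : SimpleGraph V} {u v : V}
    (huv : G.Adj u v) (h : G.neighborSet u \ {v} = G.neighborSet v \ {u}) :
    insert u (G.neighborSet u) = insert v (G.neighborSet v) :=
  calc insert u (G.neighborSet u) = insert u (insert v (G.neighborSet u \ {v})) := by
        rw [Set.insert_sdiff_singleton, Set.insert_eq_of_mem (show v ∈ G.neighborSet u from huv)]
    _ = insert v (insert u (G.neighborSet v \ {u})) := by rw [h, Set.insert_comm]
    _ = insert v (G.neighborSet v) := by
        rw [Set.insert_sdiff_singleton,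
          Set.insert_eq_of_mem (show u ∈ G.neighborSet v from huv.symm)]

theorem SimpleGraph.adjMatrix_add_one_col {V R : Type*} [Fintype V] [DecidableEq V]
    [NonAssocSemiring R] (G : SimpleGraph V) [DecidableRel G.Adj] (v : V) :
    (G.adjMatrix R + 1).col v = Set.indicator (insert v (G.neighborSet v)) 1 := by
  ext w
  by_cases hwv : w = v
  · subst hwv; simp
  · simp [Set.indicator_apply, one_apply, hwv, G.adj_comm v w]

theorem adjMatrix_neg_one_eigenspace_of_clique_twins_general
    {V : Type*} [Fintype V] [DecidableEq V]
    (G : SimpleGraph V) [DecidableRel G.Adj]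
    (S : Finset V)
    (hClique : ∀ u ∈ S, ∀ v ∈ S, u ≠ v → G.Adj u v)
    (hNbr : ∀ u ∈ S, ∀ v ∈ S, G.neighborSet u \ {v} = G.neighborSet v \ {u}) :
    S.card - 1 ≤ Module.finrank ℝ (LinearMap.ker (G.adjMatrix ℝ + 1).mulVecLin) := by
  refine (G.adjMatrix ℝ + 1).card_sub_one_le_finrank_ker_mulVecLin S fun u hu v hv => ?_
  rw [G.adjMatrix_add_one_col, G.adjMatrix_add_one_col]
  rcases eq_or_ne u v with rfl | huv
  · rfl
  · rw [G.insert_neighborSet_eq_of_adj (hClique u hu v hv huv) (hNbr u hu v hv)]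

/-- Theorem 6.2 (2): if `S` is a clique of a graph `G` with `|S| ≥ 2` whose vertices
pairwise have the same neighbors outside each other, then the eigenspace of the
adjacency matrix for the eigenvalue `-1` (the kernel of `x ↦ (A + I) *ᵥ x`) has
dimension at least `|S| - 1`. -/
theorem adjMatrix_neg_one_eigenspace_of_clique_twins
    {V : Type*} [Fintype V] [DecidableEq V]
    (G : SimpleGraph V) [DecidableRel G.Adj]
    (S : Finset V) (hS : 2 ≤ S.card)
    (hClique : ∀ u ∈ S, ∀ v ∈ S, u ≠ v → G.Adj u v)
    (hNbr : ∀ u ∈ S, ∀ v ∈ S, G.neighborSet u \ {v} = G.neighborSet v \ {u}) :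
    S.card - 1 ≤ Module.finrank ℝ (LinearMap.ker (G.adjMatrix ℝ + 1).mulVecLin) :=
  adjMatrix_neg_one_eigenspace_of_clique_twins_general G S hClique hNbr
end
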